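/- Let k ≥ 1 be an integer, let I⁺ ⊆ (0, +∞) be a nonempty open interval, set I⁻ := {−x : x ∈ I⁺} and I := I⁺ ∪ I⁻. Let y : ℝ → ℝ be k times continuously differentiable on I, even on I (i.e. y(−x) = y(x) for all x ∈ I), and satisfy ∑_{ℓ=1}^{k} a_ℓ^{(k)} · x^{ℓ−1} · y^{(ℓ)}(x) = 0 for every x ∈ I. Then there exist real numbers c_0, …, c_{k−1} such that y(x) = ∑_{ℓ=0}^{k−1} c_ℓ · x^{2ℓ} for every x ∈ I; in particular, y restricted to I extends to a C^∞ (polynomial) function on all of ℝ. -/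

import Mathlib

/-- The coefficients `a_ℓ^{(k)}` from Proposition 4.2 of the paper. -/
noncomputable def coeffA (k ℓ : ℕ) : ℚ :=
  if ℓ = 0 then 0
  else (-2 : ℚ) ^ ((ℓ : ℤ) - (k : ℤ)) * (Nat.factorial (2 * k - ℓ - 1)) /
    ((Nat.factorial (ℓ - 1)) * (Nat.factorial (k - ℓ)))

lemma coeffA_zero (n : ℕ) : coeffA n 0 = 0 := by unfold coeffA; simp

lemma coeffA_diag (n : ℕ) (hn : 1 ≤ n) : coeffA n n = 1 := by
  unfold coeffA
  rw [if_neg (by omega)]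
  have h1 : 2 * n - n - 1 = n - 1 := by omega
  have h2 : n - n = 0 := by omega
  rw [h1, h2, sub_self, zpow_zero]
  simp [Nat.factorial_ne_zero]

lemma zpow_neg2 (m : ℕ) : (-2 : ℚ) ^ (-(m:ℤ)) = ((-2:ℚ)^m)⁻¹ := by
  rw [zpow_neg, zpow_natCast]

lemma coeffA_rec (n ℓ : ℕ) (h1 : 1 ≤ ℓ) (h2 : ℓ ≤ n) :
    coeffA (n+1) ℓ = ((ℓ:ℚ) - 2*n) * coeffA n ℓ + coeffA n (ℓ-1) := by
  have hne : ∀ j : ℕ, ((Nat.factorial j : ℚ)) ≠ 0 := fun j => by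
    exact_mod_cast Nat.factorial_ne_zero j
  have hpow : ∀ j : ℕ, ((-2:ℚ)^j) ≠ 0 := fun j => pow_ne_zero _ (by norm_num)
  rcases eq_or_lt_of_le h1 with h1' | h1'
  · -- ℓ = 1
    obtain ⟨m, rfl⟩ : ∃ m, n = m + 1 := ⟨n - 1, by omega⟩
    have : ℓ = 1 := h1'.symm
    subst this
    unfold coeffA
    rw [if_neg (by omega), if_neg (by omega), if_pos rfl]
    have e1 : 2 * (m + 1 + 1) - 1 - 1 = 2*m + 2 := by omega
    have e2 : (1:ℕ) - 1 = 0 := rfl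
    have e3 : m + 1 + 1 - 1 = m + 1 := by omega
    have e4 : 2 * (m + 1) - 1 - 1 = 2*m := by omega
    have e5 : m + 1 - 1 = m := by omega
    rw [e1, e2, e3, e4, e5]
    have z1 : ((1:ℕ) : ℤ) - ((m+1+1 : ℕ) : ℤ) = -((m+1 : ℕ) : ℤ) := by push_cast; ring
    have z2 : ((1:ℕ) : ℤ) - ((m+1 : ℕ) : ℤ) = -((m : ℕ) : ℤ) := by push_cast; ring
    rw [z1, z2, zpow_neg2, zpow_neg2]
    have f1 : Nat.factorial (2*m+2) = (2*m+2) * ((2*m+1) * Nat.factorial (2*m)) := by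
      rw [show 2*m+2 = (2*m+1)+1 by ring, Nat.factorial_succ, Nat.factorial_succ]
    have f2 : Nat.factorial (m+1) = (m+1) * Nat.factorial m := Nat.factorial_succ m
    have p1 : ((-2:ℚ))^(m+1) = (-2) * (-2)^m := by ring
    rw [f1, f2, p1]
    push_cast
    field_simp
    ring
  · -- 2 ≤ ℓ
    obtain ⟨p, rfl⟩ : ∃ p, ℓ = p + 1 + 1 := ⟨ℓ - 2, by omega⟩
    obtain ⟨m, rfl⟩ : ∃ m, n = (p+1+1) + m := ⟨n - (p+2), by omega⟩
    unfold coeffA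
    rw [if_neg (by omega), if_neg (by omega), if_neg (by omega)]
    have e0 : p + 1 + 1 - 1 = p + 1 := by omega
    have e1 : 2 * (p+1+1+m+1) - (p+1+1) - 1 = (p + 2*m + 3) := by omega
    have e2 : p+1+1+m+1 - (p+1+1) = m + 1 := by omega
    have e3 : 2 * (p+1+1+m) - (p+1+1) - 1 = p + 2*m + 1 := by omega
    have e4 : p+1+1+m - (p+1+1) = m := by omega
    have e5 : 2 * (p+1+1+m) - (p+1) - 1 = p + 2*m + 2 := by omega
    have e6 : p + 1 - 1 = p := by omega
    have e7 : p+1+1+m - (p+1) = m + 1 := by omega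
    rw [e0, e1, e2, e3, e4, e5, e6, e7]
    have z1 : ((p+1+1:ℕ) : ℤ) - ((p+1+1+m+1 : ℕ) : ℤ) = -((m+1 : ℕ) : ℤ) := by push_cast; ring
    have z2 : ((p+1+1:ℕ) : ℤ) - ((p+1+1+m : ℕ) : ℤ) = -((m : ℕ) : ℤ) := by push_cast; ring
    have z3 : ((p+1:ℕ) : ℤ) - ((p+1+1+m : ℕ) : ℤ) = -((m+1 : ℕ) : ℤ) := by push_cast; ring
    rw [z1, z2, z3, zpow_neg2, zpow_neg2]
    have f1 : Nat.factorial (p+2*m+3) = (p+2*m+3) * ((p+2*m+2) * Nat.factorial (p+2*m+1)) := by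
      rw [show p+2*m+3 = (p+2*m+2)+1 by ring, Nat.factorial_succ, Nat.factorial_succ]
    have fm : Nat.factorial (p+2*m+2) = (p+2*m+2) * Nat.factorial (p+2*m+1) := Nat.factorial_succ _
    have f2 : Nat.factorial (m+1) = (m+1) * Nat.factorial m := Nat.factorial_succ m
    have f3 : Nat.factorial (p+1) = (p+1) * Nat.factorial p := Nat.factorial_succ p
    have p1 : ((-2:ℚ))^(m+1) = (-2) * (-2)^m := by ring
    rw [f1, fm, f2, f3, p1]
    push_cast
    field_simp
    ring

lemma coeffA_rec_real (n ℓ : ℕ) (h1 : 1 ≤ ℓ) (h2 : ℓ ≤ n) :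
    ((coeffA (n+1) ℓ : ℚ) : ℝ)
      = ((ℓ:ℝ) - 2*n) * ((coeffA n ℓ : ℚ) : ℝ) + ((coeffA n (ℓ-1) : ℚ) : ℝ) := by
  have h := congrArg (fun q : ℚ => (q : ℝ)) (coeffA_rec n ℓ h1 h2)
  push_cast at h ⊢
  convert h using 2 <;> push_cast <;> ring

lemma iteratedDerivWithin_of_isOpen' {s : Set ℝ} (hs : IsOpen s) {x : ℝ} (hx : x ∈ s)
    (n : ℕ) (f : ℝ → ℝ) : iteratedDerivWithin n f s x = iteratedDeriv n f x := by
  rw [iteratedDerivWithin_eq_iteratedFDerivWithin, iteratedDeriv_eq_iteratedFDeriv,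
    iteratedFDerivWithin_of_isOpen n hs hx]

lemma hasDerivAt_iteratedDeriv {y : ℝ → ℝ} {s : Set ℝ} (hs : IsOpen s) {k ℓ : ℕ}
    (hy : ContDiffOn ℝ k y s) (hℓ : ℓ < k) {x : ℝ} (hx : x ∈ s) :
    HasDerivAt (iteratedDeriv ℓ y) (iteratedDeriv (ℓ+1) y x) x := by
  have hu : UniqueDiffOn ℝ s := hs.uniqueDiffOn
  have hd : DifferentiableOn ℝ (iteratedDerivWithin ℓ y s) s :=
    hy.differentiableOn_iteratedDerivWithin (by exact_mod_cast hℓ) hu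
  have heq : iteratedDerivWithin ℓ y s =ᶠ[nhds x] iteratedDeriv ℓ y := by
    filter_upwards [hs.mem_nhds hx] with z hz
    exact iteratedDerivWithin_of_isOpen' hs hz ℓ y
  have hdx : DifferentiableAt ℝ (iteratedDeriv ℓ y) x :=
    heq.differentiableAt_iff.mp ((hd x hx).differentiableAt (hs.mem_nhds hx))
  have h2 := hdx.hasDerivAt
  rwa [← iteratedDeriv_succ] at h2

noncomputable def Uaux (y : ℝ → ℝ) (n : ℕ) (x : ℝ) : ℝ :=
  ∑ ℓ ∈ Finset.Icc 1 n, (coeffA n ℓ : ℝ) * x ^ (ℓ - 1) * iteratedDeriv ℓ y x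

lemma nat_mul_pow_pred (x : ℝ) (i : ℕ) : (i:ℝ) * x^(i-1) * x = (i:ℝ) * x^i := by
  cases i with
  | zero => simp
  | succ j =>
    simp only [Nat.add_sub_cancel, pow_succ]
    ring

lemma Uaux_hasDerivAt {y : ℝ → ℝ} {s : Set ℝ} (hs : IsOpen s) {k n : ℕ}
    (hy : ContDiffOn ℝ k y s) (hnk : n < k) {x : ℝ} (hx : x ∈ s) :
    HasDerivAt (Uaux y n)
      (∑ ℓ ∈ Finset.Icc 1 n,
        (((coeffA n ℓ : ℝ) * (((ℓ-1 : ℕ) : ℝ) * x ^ (ℓ-1-1))) * iteratedDeriv ℓ y x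
          + ((coeffA n ℓ : ℝ) * x ^ (ℓ-1)) * iteratedDeriv (ℓ+1) y x)) x := by
  apply HasDerivAt.fun_sum
  intro ℓ hℓ
  have hℓk : ℓ < k := lt_of_le_of_lt (Finset.mem_Icc.mp hℓ).2 hnk
  exact ((hasDerivAt_pow (ℓ-1) x).const_mul ((coeffA n ℓ : ℝ))).mul
    (hasDerivAt_iteratedDeriv hs hy hℓk hx)

lemma Uaux_rec_alg {q : ℕ} (x : ℝ) (d : ℕ → ℝ) :
    ∑ ℓ ∈ Finset.Icc 1 (q+1+1), (coeffA (q+1+1) ℓ : ℝ) * x ^ (ℓ - 1) * d ℓ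
      = x * (∑ ℓ ∈ Finset.Icc 1 (q+1),
          (((coeffA (q+1) ℓ : ℝ) * (((ℓ-1 : ℕ) : ℝ) * x ^ (ℓ-1-1))) * d ℓ
            + ((coeffA (q+1) ℓ : ℝ) * x ^ (ℓ-1)) * d (ℓ+1)))
        + (1 - 2*((q+1 : ℕ):ℝ)) *
          ∑ ℓ ∈ Finset.Icc 1 (q+1), (coeffA (q+1) ℓ : ℝ) * x ^ (ℓ - 1) * d ℓ := by
  rw [← Finset.Ico_add_one_right_eq_Icc, ← Finset.Ico_add_one_right_eq_Icc,
    Finset.sum_Ico_eq_sum_range, Finset.sum_Ico_eq_sum_range, Finset.sum_Ico_eq_sum_range]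
  simp only [Nat.add_one_sub_one, Nat.add_sub_cancel_left,
    show ∀ i:ℕ, 1+i-1 = i from fun i => by omega]
  rw [Finset.mul_sum, Finset.mul_sum]
  have hR1 : ∀ i ∈ Finset.range (q+1),
      x * (((coeffA (q+1) (1+i) : ℝ) * (((i : ℕ) : ℝ) * x ^ (i-1))) * d (1+i)
          + ((coeffA (q+1) (1+i) : ℝ) * x ^ i) * d (1+i+1))
        = (((1+i:ℕ):ℝ) - 2*((q+1:ℕ):ℝ)) * (coeffA (q+1) (1+i) : ℝ) * x ^ i * d (1+i)
          + ((coeffA (q+1) (1+i) : ℝ) * x ^ (i+1)) * d (1+i+1)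
          - (1 - 2*((q+1:ℕ):ℝ)) * ((coeffA (q+1) (1+i) : ℝ) * x ^ i * d (1+i)) := by
    intro i _
    have h := nat_mul_pow_pred x i
    rw [pow_succ]
    push_cast
    linear_combination ((coeffA (q+1) (1+i) : ℝ) * d (1+i)) * h
  rw [Finset.sum_congr rfl hR1, Finset.sum_sub_distrib, Finset.sum_add_distrib]
  have key : ∑ i ∈ Finset.range (q+1+1), (coeffA (q+1+1) (1+i) : ℝ) * x ^ i * d (1+i)
      = ∑ i ∈ Finset.range (q+1),
          (((1+i:ℕ):ℝ) - 2*((q+1:ℕ):ℝ)) * (coeffA (q+1) (1+i) : ℝ) * x ^ i * d (1+i)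
        + ∑ i ∈ Finset.range (q+1), ((coeffA (q+1) (1+i) : ℝ) * x ^ (i+1)) * d (1+i+1) := by
    rw [Finset.sum_range_succ' (fun i => (coeffA (q+1+1) (1+i) : ℝ) * x ^ i * d (1+i)) (q+1)]
    rw [Finset.sum_range_succ'
      (fun i => (((1+i:ℕ):ℝ) - 2*((q+1:ℕ):ℝ)) * (coeffA (q+1) (1+i) : ℝ) * x ^ i * d (1+i)) q]
    rw [Finset.sum_range_succ (fun i => ((coeffA (q+1) (1+i) : ℝ) * x ^ (i+1)) * d (1+i+1)) q]
    have hdiag : ((coeffA (q+1+1) (1+(q+1)) : ℚ) : ℝ) = ((coeffA (q+1) (1+q) : ℚ) : ℝ) := by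
      rw [show 1+(q+1) = (q+1)+1 from by ring, show 1+q = q+1 from by ring,
        coeffA_diag (q+1+1) (by omega), coeffA_diag (q+1) (by omega)]
    have hzero : ((coeffA (q+1+1) (1+0) : ℚ) : ℝ)
        = (((1+0:ℕ):ℝ) - 2*((q+1:ℕ):ℝ)) * ((coeffA (q+1) (1+0) : ℚ) : ℝ) := by
      have h := coeffA_rec_real (q+1) 1 le_rfl (by omega)
      simpa [coeffA_zero] using h
    have hmid : ∀ i ∈ Finset.range q,
        (coeffA (q+1+1) (1+(i+1)) : ℝ) * x ^ (i+1) * d (1+(i+1))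
          = (((1+(i+1):ℕ):ℝ) - 2*((q+1:ℕ):ℝ)) * (coeffA (q+1) (1+(i+1)) : ℝ) * x ^ (i+1)
              * d (1+(i+1))
            + ((coeffA (q+1) (1+i) : ℝ) * x ^ (i+1)) * d (1+i+1) := by
      intro i hi
      have hi' : i < q := Finset.mem_range.mp hi
      have h := coeffA_rec_real (q+1) (i+2) (by omega) (by omega)
      rw [show 1+(i+1) = i+2 from by ring, show 1+i+1 = i+2 from by ring,
        show 1+i = i+1 from by ring] at *
      rw [show (i+2)-1 = i+1 from by omega] at h
      push_cast at h ⊢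
      linear_combination (x^(i+1) * d (i+2)) * h
    rw [Finset.sum_range_succ (fun i => (coeffA (q+1+1) (1+(i+1)) : ℝ) * x ^ (i+1) * d (1+(i+1))) q]
    rw [Finset.sum_congr rfl hmid, Finset.sum_add_distrib]
    push_cast [hdiag, hzero]
    rw [show 1+(q+1) = 1+q+1 from by ring]
    ring
  rw [key]
  ring

lemma Uaux_rec {y : ℝ → ℝ} {s : Set ℝ} (hs : IsOpen s) {k n : ℕ}
    (hy : ContDiffOn ℝ k y s) (hn : 1 ≤ n) (hnk : n < k) {x : ℝ} (hx : x ∈ s) :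
    ∃ D, HasDerivAt (Uaux y n) D x ∧
      Uaux y (n+1) x = x * D + (1 - 2*(n:ℝ)) * Uaux y n x := by
  obtain ⟨q, rfl⟩ : ∃ q, n = q + 1 := ⟨n - 1, by omega⟩
  refine ⟨_, Uaux_hasDerivAt hs hy hnk hx, ?_⟩
  have := Uaux_rec_alg (q := q) x (fun ℓ => iteratedDeriv ℓ y x)
  push_cast at this ⊢
  exact this

lemma const_of_hasDerivAt_zero {a b : ℝ} {g : ℝ → ℝ}
    (h : ∀ x ∈ Set.Ioo a b, HasDerivAt g 0 x) {x z : ℝ}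
    (hx : x ∈ Set.Ioo a b) (hz : z ∈ Set.Ioo a b) : g x = g z := by
  refine (convex_Ioo a b).is_const_of_fderivWithin_eq_zero
    (fun w hw => ((h w hw).differentiableAt).differentiableWithinAt) (fun w hw => ?_) hx hz
  rw [fderivWithin_of_isOpen isOpen_Ioo hw, ((h w hw).hasFDerivAt).fderiv]
  ext t
  simp

/-- Symmetric disconnected-domain case of Lemma 4.3: an even `C^k` solution on
`I = I⁺ ∪ (−I⁺)`, with `I⁺ ⊆ (0,∞)` a nonempty open interval, of the ODE
`∑_{ℓ=1}^{k} a_ℓ^{(k)} x^{ℓ−1} y^{(ℓ)}(x) = 0` is an even polynomial on `I`;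
in particular it extends to a `C^∞` (polynomial) function on all of `ℝ`. -/
theorem ode_even_solution_product_domain (k : ℕ) (hk : 1 ≤ k) (a b : ℝ)
    (Iplus : Set ℝ) (hIplus : Iplus = Set.Ioo a b) (hne : Iplus.Nonempty)
    (hpos : Iplus ⊆ Set.Ioi (0 : ℝ))
    (I : Set ℝ) (hI : I = Iplus ∪ (fun x : ℝ => -x) '' Iplus)
    (y : ℝ → ℝ) (hy : ContDiffOn ℝ k y I)
    (heven : ∀ x ∈ I, y (-x) = y x)
    (hode : ∀ x ∈ I,
      ∑ ℓ ∈ Finset.Icc 1 k,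
        (coeffA k ℓ : ℝ) * x ^ (ℓ - 1) * iteratedDerivWithin ℓ y I x = 0) :
    ∃ c : ℕ → ℝ,
      (∀ x ∈ I, y x = ∑ ℓ ∈ Finset.range k, c ℓ * x ^ (2 * ℓ)) ∧
      ContDiff ℝ (⊤ : ℕ∞) (fun x : ℝ => ∑ ℓ ∈ Finset.range k, c ℓ * x ^ (2 * ℓ)) := by
  subst hIplus
  subst hI
  have hopen : IsOpen (Set.Ioo a b ∪ (fun x : ℝ => -x) '' Set.Ioo a b) :=
    isOpen_Ioo.union ((Homeomorph.neg ℝ).isOpenMap _ isOpen_Ioo)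
  set I : Set ℝ := Set.Ioo a b ∪ (fun x : ℝ => -x) '' Set.Ioo a b with hIdef
  have hUk : ∀ x ∈ I, Uaux y k x = 0 := by
    intro x hx
    have h0 := hode x hx
    unfold Uaux
    rw [← h0]
    exact Finset.sum_congr rfl (fun ℓ _ => by
      rw [iteratedDerivWithin_of_isOpen' hopen hx])
  obtain ⟨x0, hx0⟩ := hne
  have claim : ∀ j, j < k → ∃ c : ℕ → ℝ, ∀ x ∈ Set.Ioo a b,
      Uaux y (k-j) x = x^(2*(k-j)-1) * ∑ i ∈ Finset.range j, c i * x^(2*i) := by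
    intro j
    induction j with
    | zero =>
      intro _
      exact ⟨fun _ => 0, fun x hx => by
        simp only [Nat.sub_zero, Finset.range_zero, Finset.sum_empty, mul_zero]
        exact hUk x (Set.mem_union_left _ hx)⟩
    | succ j ih =>
      intro hjk
      obtain ⟨c, hc⟩ := ih (by omega)
      obtain ⟨m, hm⟩ : ∃ m, k - (j+1) = m + 1 := ⟨k - (j+1) - 1, by omega⟩
      set n := m + 1 with hndef
      have hn1 : 1 ≤ n := by omega
      have hnk : n < k := by omega
      have hsucc : n + 1 = k - j := by omega
      set g : ℝ → ℝ := fun x => Uaux y n x / x^(2*m+1)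
        - ∑ i ∈ Finset.range j, c i / (2*i+2) * x^(2*i+2) with hgdef
      have hg0 : ∀ x ∈ Set.Ioo a b, HasDerivAt g 0 x := by
        intro x hx
        have hxpos : (0:ℝ) < x := hpos hx
        obtain ⟨D, hD, hrec⟩ := Uaux_rec hopen hy hn1 hnk (Set.mem_union_left _ hx)
        have hc' : Uaux y (n+1) x = x^(2*m+3) * ∑ i ∈ Finset.range j, c i * x^(2*i) := by
          rw [hsucc]
          have := hc x hx
          rw [show 2*(k-j)-1 = 2*m+3 from by omega] at this
          exact this
        have hdiv := hD.div (hasDerivAt_pow (2*m+1) x) (pow_ne_zero _ hxpos.ne')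
        have hsum : HasDerivAt
            (fun x:ℝ => ∑ i ∈ Finset.range j, c i / (2*i+2) * x^(2*i+2))
            (∑ i ∈ Finset.range j, c i / (2*i+2) * (((2*i+2 : ℕ)):ℝ) * x^(2*i+1)) x := by
          apply HasDerivAt.fun_sum
          intro i _
          have := (hasDerivAt_pow (2*i+2) x).const_mul (c i / (2*i+2))
          rw [show 2*i+2-1 = 2*i+1 from by omega] at this
          refine this.congr_deriv (Eq.symm ?_)
          push_cast
          ring
        have hfinal := hdiv.sub hsum
        refine hfinal.congr_deriv (Eq.symm ?_)
        have hsum2 : ∑ i ∈ Finset.range j, c i / (2*i+2) * (((2*i+2 : ℕ)):ℝ) * x^(2*i+1)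
            = x * ∑ i ∈ Finset.range j, c i * x^(2*i) := by
          rw [Finset.mul_sum]
          refine Finset.sum_congr rfl (fun i _ => ?_)
          have h2 : ((2*i+2 : ℕ) : ℝ) ≠ 0 := by positivity
          push_cast
          field_simp
          ring
        rw [hsum2]
        rw [show (2*m+1) - 1 = 2*m from by omega]
        have hxne : x ≠ 0 := hxpos.ne'
        rw [hndef] at hrec
        push_cast at hrec
        field_simp
        push_cast
        linear_combination x^(2*m) * hrec - x^(2*m) * hc'
      refine ⟨fun i => if i = 0 then g x0 else c (i-1) / (2*((i-1 : ℕ):ℝ)+2), fun x hx => ?_⟩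
      have hconst : g x = g x0 := const_of_hasDerivAt_zero hg0 hx hx0
      have hxpos : (0:ℝ) < x := hpos hx
      have hxne : x ≠ 0 := hxpos.ne'
      have hthis : Uaux y n x / x^(2*m+1)
          = g x0 + ∑ i ∈ Finset.range j, c i / (2*i+2) * x^(2*i+2) := by
        rw [← hconst, hgdef]
        ring
      rw [div_eq_iff (pow_ne_zero _ hxne)] at hthis
      rw [hm, show 2*n-1 = 2*m+1 from by omega, hthis]
      have hS : ∑ i ∈ Finset.range (j+1),
          (if i = 0 then g x0 else c (i-1) / (2*((i-1 : ℕ):ℝ)+2)) * x^(2*i)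
          = g x0 + ∑ i ∈ Finset.range j, c i / (2*(i:ℝ)+2) * x^(2*i+2) := by
        rw [Finset.sum_range_succ'
          (fun i => (if i = 0 then g x0 else c (i-1) / (2*((i-1 : ℕ):ℝ)+2)) * x^(2*i)) j]
        simp only [Nat.add_sub_cancel, Nat.succ_ne_zero, reduceIte, Nat.reduceMul,
          pow_zero, mul_one]
        have hterm : ∀ i ∈ Finset.range j,
            c i / (2*(i:ℝ)+2) * x^(2*(i+1)) = c i / (2*(i:ℝ)+2) * x^(2*i+2) :=
          fun i _ => by rw [show 2*(i+1) = 2*i+2 from by ring]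
        rw [Finset.sum_congr rfl hterm]
        exact add_comm _ _
      rw [hS]
      ring
  obtain ⟨c, hc⟩ := claim (k-1) (by omega)
  have hk1 : k - (k-1) = 1 := by omega
  rw [hk1] at hc
  have hU1 : ∀ x ∈ Set.Ioo a b, iteratedDeriv 1 y x = x * ∑ i ∈ Finset.range (k-1), c i * x^(2*i) := by
    intro x hx
    have := hc x hx
    unfold Uaux at this
    rw [show (2*1-1) = 1 from rfl, pow_one] at this
    simpa [coeffA_diag 1 le_rfl] using this
  set C : ℝ := y x0 - ∑ i ∈ Finset.range (k-1), c i / (2*i+2) * x0^(2*i+2) with hCdef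
  set cfin : ℕ → ℝ := fun i => if i = 0 then C else c (i-1) / (2*((i-1 : ℕ):ℝ)+2) with hcfin
  have hpoly : ∀ x ∈ Set.Ioo a b, y x = ∑ ℓ ∈ Finset.range k, cfin ℓ * x^(2*ℓ) := by
    intro x hx
    set h : ℝ → ℝ := fun x => y x
      - ∑ i ∈ Finset.range (k-1), c i / (2*i+2) * x^(2*i+2) with hhdef
    have hh0 : ∀ x ∈ Set.Ioo a b, HasDerivAt h 0 x := by
      intro x hx
      have hyd : HasDerivAt y (iteratedDeriv 1 y x) x := by
        have := hasDerivAt_iteratedDeriv hopen hy (show 0 < k from hk) (Set.mem_union_left _ hx)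
        simpa [iteratedDeriv_zero] using this
      have hsum : HasDerivAt
          (fun x:ℝ => ∑ i ∈ Finset.range (k-1), c i / (2*i+2) * x^(2*i+2))
          (∑ i ∈ Finset.range (k-1), c i * x^(2*i+1)) x := by
        apply HasDerivAt.fun_sum
        intro i _
        have := (hasDerivAt_pow (2*i+2) x).const_mul (c i / (2*i+2))
        rw [show 2*i+2-1 = 2*i+1 from by omega] at this
        refine this.congr_deriv (Eq.symm ?_)
        have h2 : ((2*i+2 : ℕ) : ℝ) ≠ 0 := by positivity
        push_cast
        field_simp
      have hcomb := hyd.sub hsum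
      refine hcomb.congr_deriv (Eq.symm ?_)
      rw [hU1 x hx, Finset.mul_sum, ← Finset.sum_sub_distrib]
      symm
      apply Finset.sum_eq_zero
      intro i _
      ring
    have hconst : h x = h x0 := const_of_hasDerivAt_zero hh0 hx hx0
    have hyx : y x = C + ∑ i ∈ Finset.range (k-1), c i / (2*i+2) * x^(2*i+2) := by
      have h2 : h x = C := by rw [hconst]
      rw [hhdef] at h2
      simp only at h2
      linarith [h2]
    rw [hyx]
    rw [show k = (k-1)+1 from by omega]
    rw [Finset.sum_range_succ' (fun ℓ => cfin ℓ * x^(2*ℓ)) (k-1)]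
    simp only [hcfin, Nat.add_sub_cancel, Nat.succ_ne_zero, reduceIte, Nat.reduceMul,
      pow_zero, mul_one]
    have hterm : ∀ i ∈ Finset.range (k-1),
        c i / (2*(i:ℝ)+2) * x^(2*(i+1)) = c i / (2*(i:ℝ)+2) * x^(2*i+2) :=
      fun i _ => by rw [show 2*(i+1) = 2*i+2 from by ring]
    rw [Finset.sum_congr rfl hterm]
    exact add_comm _ _
  refine ⟨cfin, fun x hx => ?_, ?_⟩
  · rcases hx with hx | ⟨t, ht, rfl⟩
    · exact hpoly x hx
    · have h1 : y (-t) = y t := heven t (Set.mem_union_left _ ht)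
      rw [h1, hpoly t ht]
      refine Finset.sum_congr rfl (fun ℓ _ => ?_)
      rw [Even.neg_pow (even_two_mul ℓ)]
  · exact ContDiff.sum (fun i _ => contDiff_const.mul (contDiff_id.pow _))
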